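/- arXiv:2405.04696 — 3 statements merged into one kernel-verified Lean document; each statement's English description precedes it below -/
import Mathlib

section
/- Let m = 3. If X = (x₁, x₂, x₃) is an ε-equilibrium at separation δ, then the extreme candidates' outside votes are small: U₁^L(X) = F(x₁) ≤ 3(ε + Mδ) and U₃^R(X) = 1 − F(x₃) ≤ 3(ε + Mδ). -/
open MeasureTheory Classical

/-- `Fcdf f y = ∫₀^y f`, the mass of voters in `[0, y]`. -/
noncomputable def Fcdf (f : ℝ → ℝ) (y : ℝ) : ℝ := ∫ z in (0:ℝ)..y, f z

/-- Utility (vote share) of a candidate located at `p`, given the set `S` of the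
positions of the other candidates: he receives the voters between the midpoint with his
nearest left neighbour (or `0` if none) and the midpoint with his nearest right
neighbour (or `1` if none). -/
noncomputable def util (f : ℝ → ℝ) (p : ℝ) (S : Set ℝ) : ℝ :=
  Fcdf f (if {s ∈ S | p < s}.Nonempty then (p + sInf {s ∈ S | p < s}) / 2 else 1)
    - Fcdf f (if {s ∈ S | s < p}.Nonempty then (p + sSup {s ∈ S | s < p}) / 2 else 0)

/-- `X = (x₁, x₂, x₃)` (with `x₁ < x₂ < x₃`) is an `ε`-equilibrium at separation `δ`:
no candidate can move to an admissible location (within `[0,1]`, at distance at least `δ`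
from every other candidate) and increase his utility by more than `ε`. -/
def IsEquilibrium3 (f : ℝ → ℝ) (x₁ x₂ x₃ δ ε : ℝ) : Prop :=
  (∀ x' ∈ Set.Icc (0:ℝ) 1, δ ≤ |x' - x₂| → δ ≤ |x' - x₃| →
      util f x' {x₂, x₃} ≤ util f x₁ {x₂, x₃} + ε) ∧
  (∀ x' ∈ Set.Icc (0:ℝ) 1, δ ≤ |x' - x₁| → δ ≤ |x' - x₃| →
      util f x' {x₁, x₃} ≤ util f x₂ {x₁, x₃} + ε) ∧
  (∀ x' ∈ Set.Icc (0:ℝ) 1, δ ≤ |x' - x₁| → δ ≤ |x' - x₂| →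
      util f x' {x₁, x₂} ≤ util f x₃ {x₁, x₂} + ε)

lemma Fcdf_bounds (f : ℝ → ℝ) (M : ℝ) (hfi : IntervalIntegrable f volume 0 1)
    (hf0 : ∀ z ∈ Set.Icc (0:ℝ) 1, 0 ≤ f z) (hfM : ∀ z ∈ Set.Icc (0:ℝ) 1, f z ≤ M)
    {u v : ℝ} (hu : 0 ≤ u) (huv : u ≤ v) (hv : v ≤ 1) :
    Fcdf f u ≤ Fcdf f v ∧ Fcdf f v ≤ Fcdf f u + M * (v - u) := by
  have hsub : Set.uIcc u v ⊆ Set.uIcc (0:ℝ) 1 := by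
    rw [Set.uIcc_of_le huv, Set.uIcc_of_le (by norm_num : (0:ℝ) ≤ 1)]
    exact Set.Icc_subset_Icc hu hv
  have hint : IntervalIntegrable f volume u v := hfi.mono_set hsub
  have h0u : IntervalIntegrable f volume 0 u := hfi.mono_set (by
    rw [Set.uIcc_of_le hu, Set.uIcc_of_le (by norm_num : (0:ℝ) ≤ 1)]
    exact Set.Icc_subset_Icc le_rfl (le_trans huv hv))
  have hsplit : Fcdf f v - Fcdf f u = ∫ z in u..v, f z := by
    unfold Fcdf
    rw [← intervalIntegral.integral_add_adjacent_intervals h0u hint]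
    ring
  have hmem : ∀ z ∈ Set.Icc u v, z ∈ Set.Icc (0:ℝ) 1 := fun z hz =>
    ⟨le_trans hu hz.1, le_trans hz.2 hv⟩
  constructor
  · have h1 : 0 ≤ ∫ z in u..v, f z :=
      intervalIntegral.integral_nonneg huv (fun z hz => hf0 z (hmem z hz))
    linarith
  · have hle : (∫ z in u..v, f z) ≤ ∫ _ in u..v, M :=
      intervalIntegral.integral_mono_on huv hint intervalIntegrable_const
        (fun z hz => hfM z (hmem z hz))
    rw [intervalIntegral.integral_const, smul_eq_mul] at hle
    nlinarith

lemma util_left (f : ℝ → ℝ) {p y z : ℝ} (h1 : p < y) (h2 : y < z) :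
    util f p {y, z} = Fcdf f ((p + y) / 2) - Fcdf f 0 := by
  unfold util
  have hgt : {s ∈ ({y, z} : Set ℝ) | p < s} = {y, z} := by
    ext s
    simp only [Set.mem_sep_iff, Set.mem_insert_iff, Set.mem_singleton_iff]
    constructor
    · rintro ⟨h, _⟩; exact h
    · rintro (rfl | rfl)
      · exact ⟨Or.inl rfl, h1⟩
      · exact ⟨Or.inr rfl, h1.trans h2⟩
  have hlt : {s ∈ ({y, z} : Set ℝ) | s < p} = ∅ := by
    ext s
    simp only [Set.mem_sep_iff, Set.mem_insert_iff, Set.mem_singleton_iff,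
      Set.mem_empty_iff_false, iff_false]
    rintro ⟨rfl | rfl, h⟩ <;> linarith
  rw [hgt, hlt, if_pos (Set.insert_nonempty y {z}),
    if_neg Set.not_nonempty_empty, csInf_pair, inf_eq_left.mpr h2.le]

lemma util_mid (f : ℝ → ℝ) {p y z : ℝ} (h1 : y < p) (h2 : p < z) :
    util f p {y, z} = Fcdf f ((p + z) / 2) - Fcdf f ((p + y) / 2) := by
  unfold util
  have hgt : {s ∈ ({y, z} : Set ℝ) | p < s} = {z} := by
    ext s
    simp only [Set.mem_sep_iff, Set.mem_insert_iff, Set.mem_singleton_iff]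
    constructor
    · rintro ⟨rfl | rfl, h⟩
      · exact absurd h (not_lt.mpr h1.le)
      · rfl
    · rintro rfl; exact ⟨Or.inr rfl, h2⟩
  have hlt : {s ∈ ({y, z} : Set ℝ) | s < p} = {y} := by
    ext s
    simp only [Set.mem_sep_iff, Set.mem_insert_iff, Set.mem_singleton_iff]
    constructor
    · rintro ⟨rfl | rfl, h⟩
      · rfl
      · exact absurd h (not_lt.mpr h2.le)
    · rintro rfl; exact ⟨Or.inl rfl, h1⟩
  rw [hgt, hlt, if_pos (Set.singleton_nonempty z),
    if_pos (Set.singleton_nonempty y), csInf_singleton, csSup_singleton]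

lemma util_right (f : ℝ → ℝ) {p y z : ℝ} (h1 : y < z) (h2 : z < p) :
    util f p {y, z} = Fcdf f 1 - Fcdf f ((p + z) / 2) := by
  unfold util
  have hgt : {s ∈ ({y, z} : Set ℝ) | p < s} = ∅ := by
    ext s
    simp only [Set.mem_sep_iff, Set.mem_insert_iff, Set.mem_singleton_iff,
      Set.mem_empty_iff_false, iff_false]
    rintro ⟨rfl | rfl, h⟩ <;> linarith
  have hlt : {s ∈ ({y, z} : Set ℝ) | s < p} = {y, z} := by
    ext s
    simp only [Set.mem_sep_iff, Set.mem_insert_iff, Set.mem_singleton_iff]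
    constructor
    · rintro ⟨h, _⟩; exact h
    · rintro (rfl | rfl)
      · exact ⟨Or.inl rfl, h1.trans h2⟩
      · exact ⟨Or.inr rfl, h2⟩
  rw [hgt, hlt, if_neg Set.not_nonempty_empty,
    if_pos (Set.insert_nonempty y {z}), csSup_pair, sup_eq_right.mpr h1.le]

/-- In any ε-equilibrium with three candidates, the extreme candidates'
outside votes `U₁ᴸ = F(x₁)` and `U₃ᴿ = 1 − F(x₃)` are both at most `3(ε + Mδ)`. -/
theorem stmt2 (f : ℝ → ℝ) (M δ ε x₁ x₂ x₃ : ℝ)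
    (hM : 0 < M)
    (hfi : IntervalIntegrable f volume 0 1)
    (hf0 : ∀ z ∈ Set.Icc (0:ℝ) 1, 0 ≤ f z)
    (hfM : ∀ z ∈ Set.Icc (0:ℝ) 1, f z ≤ M)
    (hf1 : (∫ z in (0:ℝ)..1, f z) = 1)
    (hδ : 0 < δ) (hMδ : M * δ < 1/1000)
    (h0 : 0 ≤ x₁) (h12 : x₁ + δ ≤ x₂) (h23 : x₂ + δ ≤ x₃) (h3 : x₃ ≤ 1)
    (heq : IsEquilibrium3 f x₁ x₂ x₃ δ ε) :
    Fcdf f x₁ ≤ 3 * (ε + M * δ) ∧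
    1 - Fcdf f x₃ ≤ 3 * (ε + M * δ) := by
  obtain ⟨heq1, heq2, heq3⟩ := heq
  have hx11 : x₁ ≤ 1 := by linarith
  have hF1 : Fcdf f 1 = 1 := hf1
  have hF0 : Fcdf f 0 = 0 := intervalIntegral.integral_same
  have hMδ0 : 0 ≤ M * δ := le_of_lt (mul_pos hM hδ)
  have hε : 0 ≤ ε := by
    have := heq1 x₁ ⟨h0, hx11⟩ (le_abs.mpr (Or.inr (by linarith)))
      (le_abs.mpr (Or.inr (by linarith)))
    linarith
  -- candidate 1 deviates to x₂ - δ
  have hdev1 : Fcdf f ((x₂ - δ + x₂) / 2) ≤ Fcdf f ((x₁ + x₂) / 2) + ε := by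
    have h := heq1 (x₂ - δ) ⟨by linarith, by linarith⟩
      (le_abs.mpr (Or.inr (by linarith))) (le_abs.mpr (Or.inr (by linarith)))
    rwa [util_left f (show x₂ - δ < x₂ by linarith) (show x₂ < x₃ by linarith),
      util_left f (show x₁ < x₂ by linarith) (show x₂ < x₃ by linarith), hF0,
      sub_zero, sub_zero] at h
  -- candidate 3 deviates to x₂ + δ
  have hdev3 : Fcdf f ((x₂ + x₃) / 2) ≤ Fcdf f ((x₂ + δ + x₂) / 2) + ε := by
    have h := heq3 (x₂ + δ) ⟨by linarith, by linarith⟩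
      (le_abs.mpr (Or.inl (by linarith))) (le_abs.mpr (Or.inl (by linarith)))
    rw [util_right f (show x₁ < x₂ by linarith) (show x₂ < x₂ + δ by linarith),
      util_right f (show x₁ < x₂ by linarith) (show x₂ < x₃ by linarith), hF1,
      show (x₃ + x₂) / 2 = (x₂ + x₃) / 2 by ring] at h
    linarith
  -- Lipschitz bounds around x₂
  have hL2 := (Fcdf_bounds f M hfi hf0 hfM
    (u := x₂) (v := (x₂ + δ + x₂) / 2) (by linarith) (by linarith) (by linarith)).2
  have hL3 := (Fcdf_bounds f M hfi hf0 hfM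
    (u := (x₂ - δ + x₂) / 2) (v := x₂) (by linarith) (by linarith) (by linarith)).2
  constructor
  · by_cases hc : x₁ < δ
    · have h := (Fcdf_bounds f M hfi hf0 hfM (u := 0) (v := x₁) le_rfl h0 hx11).2
      rw [hF0] at h
      nlinarith
    · push_neg at hc
      -- candidate 2 deviates to x₁ - δ
      have hdev2 : Fcdf f ((x₁ - δ + x₁) / 2) ≤
          Fcdf f ((x₂ + x₃) / 2) - Fcdf f ((x₁ + x₂) / 2) + ε := by
        have h := heq2 (x₁ - δ) ⟨by linarith, by linarith⟩
          (le_abs.mpr (Or.inr (by linarith))) (le_abs.mpr (Or.inr (by linarith)))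
        rwa [util_left f (show x₁ - δ < x₁ by linarith) (show x₁ < x₃ by linarith),
          util_mid f (show x₁ < x₂ by linarith) (show x₂ < x₃ by linarith), hF0,
          sub_zero, show (x₂ + x₁) / 2 = (x₁ + x₂) / 2 by ring] at h
      have hLa := (Fcdf_bounds f M hfi hf0 hfM
        (u := (x₁ - δ + x₁) / 2) (v := x₁) (by linarith) (by linarith) (by linarith)).2
      linarith
  · by_cases hc : 1 - δ < x₃
    · have h := (Fcdf_bounds f M hfi hf0 hfM (u := x₃) (v := 1)
        (by linarith) h3 le_rfl).2
      rw [hF1] at h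
      nlinarith
    · push_neg at hc
      -- candidate 2 deviates to x₃ + δ
      have hdev2 : 1 - Fcdf f ((x₃ + δ + x₃) / 2) ≤
          Fcdf f ((x₂ + x₃) / 2) - Fcdf f ((x₁ + x₂) / 2) + ε := by
        have h := heq2 (x₃ + δ) ⟨by linarith, by linarith⟩
          (le_abs.mpr (Or.inl (by linarith))) (le_abs.mpr (Or.inl (by linarith)))
        rwa [util_right f (show x₁ < x₃ by linarith) (show x₃ < x₃ + δ by linarith),
          util_mid f (show x₁ < x₂ by linarith) (show x₂ < x₃ by linarith), hF1,
          show (x₂ + x₁) / 2 = (x₁ + x₂) / 2 by ring] at h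
      have hLb := (Fcdf_bounds f M hfi hf0 hfM
        (u := x₃) (v := (x₃ + δ + x₃) / 2) (by linarith) (by linarith) (by linarith)).2
      linarith
end

section
/- Let ε = 1/12 and define the density f on [0,1] by: f(z) = 22ε for 0 ≤ z < 3/22; f(z) = 121ε(7/22 − z) for 3/22 ≤ z < 7/22; f(z) = (121/2)ε(z − 7/22) for 7/22 ≤ z < 11/22; f(z) = (121/2)ε(15/22 − z) for 11/22 ≤ z < 15/22; f(z) = 121ε(z − 15/22) for 15/22 ≤ z < 19/22; f(z) = 22ε for 19/22 ≤ z ≤ 1. Then f is nonnegative, bounded by M = 22ε = 11/6, and integrates to 1 over [0,1], and for every δ with 0 < δ ≤ 10⁻⁴ the strategy profile X = (3/22, 1/2, 19/22) of three candidates is a 1/12-equilibrium at separation δ. -/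
open MeasureTheory Classical

/-- The sawtooth-like density from Theorem 3.2 of the paper, with ε = 1/12. -/
noncomputable def fSaw : ℝ → ℝ := fun z =>
  if z < 3/22 then 22 * (1/12)
  else if z < 7/22 then 121 * (1/12) * (7/22 - z)
  else if z < 11/22 then (121/2) * (1/12) * (z - 7/22)
  else if z < 15/22 then (121/2) * (1/12) * (15/22 - z)
  else if z < 19/22 then 121 * (1/12) * (z - 15/22)
  else 22 * (1/12)

lemma fSaw_bounds (z : ℝ) : 0 ≤ fSaw z ∧ fSaw z ≤ 11/6 := by
  unfold fSaw; split_ifs <;> constructor <;> linarith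

lemma fSaw_meas : Measurable fSaw := by
  unfold fSaw
  have hid : Measurable fun z : ℝ => z := measurable_id
  refine Measurable.ite (measurableSet_lt hid measurable_const) measurable_const ?_
  refine Measurable.ite (measurableSet_lt hid measurable_const) (by fun_prop) ?_
  refine Measurable.ite (measurableSet_lt hid measurable_const) (by fun_prop) ?_
  refine Measurable.ite (measurableSet_lt hid measurable_const) (by fun_prop) ?_
  exact Measurable.ite (measurableSet_lt hid measurable_const) (by fun_prop) measurable_const

lemma fSaw_ii (a b : ℝ) : IntervalIntegrable fSaw volume a b := by
  rw [intervalIntegrable_iff]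
  apply MeasureTheory.Measure.integrableOn_of_bounded (M := 11/6) measure_Ioc_lt_top.ne
    fSaw_meas.aestronglyMeasurable
  apply Filter.Eventually.of_forall
  intro x
  rw [Real.norm_eq_abs, abs_le]
  constructor <;> [linarith [(fSaw_bounds x).1]; exact (fSaw_bounds x).2]

noncomputable def Gsaw : ℝ → ℝ := fun y =>
  if y < 3/22 then 11/6 * y
  else if y < 7/22 then 5/12 - 121/24 * (7/22 - y)^2
  else if y < 11/22 then 5/12 + 121/48 * (y - 7/22)^2
  else if y < 15/22 then 7/12 - 121/48 * (15/22 - y)^2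
  else if y < 19/22 then 7/12 + 121/24 * (y - 15/22)^2
  else 3/4 + 11/6 * (y - 19/22)

lemma quadDeriv (c0 c1 c2 y : ℝ) :
    HasDerivAt (fun t : ℝ => c0 + c1 * t + c2 * t ^ 2) (c1 + 2 * c2 * y) y := by
  have h1 : HasDerivAt (fun t : ℝ => c0 + c1 * t) c1 y := by
    simpa using ((hasDerivAt_id y).const_mul c1).const_add c0
  have h2 : HasDerivAt (fun t : ℝ => c2 * t ^ 2) (c2 * (2 * y)) y := by
    simpa using (hasDerivAt_pow 2 y).const_mul c2
  have := h1.add h2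
  rw [show c1 + 2 * c2 * y = c1 + c2 * (2 * y) by ring]
  exact this

lemma quadDeriv' (c0 c1 c2 y d : ℝ) (h : c1 + 2 * c2 * y = d) :
    HasDerivAt (fun t : ℝ => c0 + c1 * t + c2 * t ^ 2) d y := h ▸ quadDeriv c0 c1 c2 y

lemma glue {G p q : ℝ → ℝ} {a c b d : ℝ} (hac : a < c) (hcb : c < b)
    (hGc : G c = p c) (hGc' : G c = q c)
    (hGp : ∀ y, a < y → y < c → G y = p y) (hGq : ∀ y, c < y → y < b → G y = q y)
    (hp : HasDerivAt p d c) (hq : HasDerivAt q d c) : HasDerivAt G d c := by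
  have h1 : HasDerivWithinAt G d (Set.Iic c) c := by
    refine (hp.hasDerivWithinAt).congr_of_eventuallyEq ?_ hGc
    filter_upwards [mem_nhdsWithin_of_mem_nhds (Ioo_mem_nhds hac hcb),
      self_mem_nhdsWithin] with t ht1 ht2
    rcases eq_or_lt_of_le (Set.mem_Iic.mp ht2) with h | h
    · rw [h]; exact hGc
    · exact hGp t ht1.1 h
  have h2 : HasDerivWithinAt G d (Set.Ici c) c := by
    refine (hq.hasDerivWithinAt).congr_of_eventuallyEq ?_ hGc'
    filter_upwards [mem_nhdsWithin_of_mem_nhds (Ioo_mem_nhds hac hcb),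
      self_mem_nhdsWithin] with t ht1 ht2
    rcases eq_or_lt_of_le (Set.mem_Ici.mp ht2) with h | h
    · rw [← h]; exact hGc'
    · exact hGq t h ht1.2
  have h3 := h1.union h2
  rw [Set.Iic_union_Ici] at h3
  exact hasDerivWithinAt_univ.mp h3

set_option maxHeartbeats 2000000 in
lemma hG (y : ℝ) : HasDerivAt Gsaw (fSaw y) y := by
  rcases lt_trichotomy y (3/22) with h | h | h
  · have hf : fSaw y = (11/6) + 2 * (0) * y := by
      simp only [fSaw]; split_ifs <;> first | ring1 | (exfalso; linarith)
    rw [hf]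
    refine glue (a := (y-1)) (b := 3/22) (by linarith) (by linarith) ?_ ?_ ?_ ?_
        (quadDeriv (0) (11/6) (0) y) (quadDeriv (0) (11/6) (0) y)
    · simp only [Gsaw]; split_ifs <;> first | ring1 | (exfalso; linarith)
    · simp only [Gsaw]; split_ifs <;> first | ring1 | (exfalso; linarith)
    · intro t h1 h2; simp only [Gsaw]; split_ifs <;> first | ring1 | (exfalso; linarith)
    · intro t h1 h2; simp only [Gsaw]; split_ifs <;> first | ring1 | (exfalso; linarith)
  · subst h
    rw [show fSaw (3/22) = 11/6 from by norm_num [fSaw]]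
    refine glue (a := 0) (b := 7/22) (by norm_num) (by norm_num) ?_ ?_ ?_ ?_
        (quadDeriv' (0) (11/6) (0) (3/22) (11/6) (by norm_num)) (quadDeriv' (-3/32) (77/24) (-121/24) (3/22) (11/6) (by norm_num))
    · norm_num [Gsaw]
    · norm_num [Gsaw]
    · intro t h1 h2; simp only [Gsaw]; split_ifs <;> first | ring1 | (exfalso; linarith)
    · intro t h1 h2; simp only [Gsaw]; split_ifs <;> first | ring1 | (exfalso; linarith)
  · rcases lt_trichotomy y (7/22) with h | h | h
    · have hf : fSaw y = (77/24) + 2 * (-121/24) * y := by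
        simp only [fSaw]; split_ifs <;> first | ring1 | (exfalso; linarith)
      rw [hf]
      refine glue (a := 3/22) (b := 7/22) (by linarith) (by linarith) ?_ ?_ ?_ ?_
          (quadDeriv (-3/32) (77/24) (-121/24) y) (quadDeriv (-3/32) (77/24) (-121/24) y)
      · simp only [Gsaw]; split_ifs <;> first | ring1 | (exfalso; linarith)
      · simp only [Gsaw]; split_ifs <;> first | ring1 | (exfalso; linarith)
      · intro t h1 h2; simp only [Gsaw]; split_ifs <;> first | ring1 | (exfalso; linarith)
      · intro t h1 h2; simp only [Gsaw]; split_ifs <;> first | ring1 | (exfalso; linarith)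
    · subst h
      rw [show fSaw (7/22) = 0 from by norm_num [fSaw]]
      refine glue (a := 3/22) (b := 11/22) (by norm_num) (by norm_num) ?_ ?_ ?_ ?_
          (quadDeriv' (-3/32) (77/24) (-121/24) (7/22) (0) (by norm_num)) (quadDeriv' (43/64) (-77/48) (121/48) (7/22) (0) (by norm_num))
      · norm_num [Gsaw]
      · norm_num [Gsaw]
      · intro t h1 h2; simp only [Gsaw]; split_ifs <;> first | ring1 | (exfalso; linarith)
      · intro t h1 h2; simp only [Gsaw]; split_ifs <;> first | ring1 | (exfalso; linarith)
    · rcases lt_trichotomy y (11/22) with h | h | h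
      · have hf : fSaw y = (-77/48) + 2 * (121/48) * y := by
          simp only [fSaw]; split_ifs <;> first | ring1 | (exfalso; linarith)
        rw [hf]
        refine glue (a := 7/22) (b := 11/22) (by linarith) (by linarith) ?_ ?_ ?_ ?_
            (quadDeriv (43/64) (-77/48) (121/48) y) (quadDeriv (43/64) (-77/48) (121/48) y)
        · simp only [Gsaw]; split_ifs <;> first | ring1 | (exfalso; linarith)
        · simp only [Gsaw]; split_ifs <;> first | ring1 | (exfalso; linarith)
        · intro t h1 h2; simp only [Gsaw]; split_ifs <;> first | ring1 | (exfalso; linarith)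
        · intro t h1 h2; simp only [Gsaw]; split_ifs <;> first | ring1 | (exfalso; linarith)
      · subst h
        rw [show fSaw (11/22) = 11/12 from by norm_num [fSaw]]
        refine glue (a := 7/22) (b := 15/22) (by norm_num) (by norm_num) ?_ ?_ ?_ ?_
            (quadDeriv' (43/64) (-77/48) (121/48) (11/22) (11/12) (by norm_num)) (quadDeriv' (-113/192) (55/16) (-121/48) (11/22) (11/12) (by norm_num))
        · norm_num [Gsaw]
        · norm_num [Gsaw]
        · intro t h1 h2; simp only [Gsaw]; split_ifs <;> first | ring1 | (exfalso; linarith)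
        · intro t h1 h2; simp only [Gsaw]; split_ifs <;> first | ring1 | (exfalso; linarith)
      · rcases lt_trichotomy y (15/22) with h | h | h
        · have hf : fSaw y = (55/16) + 2 * (-121/48) * y := by
            simp only [fSaw]; split_ifs <;> first | ring1 | (exfalso; linarith)
          rw [hf]
          refine glue (a := 11/22) (b := 15/22) (by linarith) (by linarith) ?_ ?_ ?_ ?_
              (quadDeriv (-113/192) (55/16) (-121/48) y) (quadDeriv (-113/192) (55/16) (-121/48) y)
          · simp only [Gsaw]; split_ifs <;> first | ring1 | (exfalso; linarith)
          · simp only [Gsaw]; split_ifs <;> first | ring1 | (exfalso; linarith)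
          · intro t h1 h2; simp only [Gsaw]; split_ifs <;> first | ring1 | (exfalso; linarith)
          · intro t h1 h2; simp only [Gsaw]; split_ifs <;> first | ring1 | (exfalso; linarith)
        · subst h
          rw [show fSaw (15/22) = 0 from by norm_num [fSaw]]
          refine glue (a := 11/22) (b := 19/22) (by norm_num) (by norm_num) ?_ ?_ ?_ ?_
              (quadDeriv' (-113/192) (55/16) (-121/48) (15/22) (0) (by norm_num)) (quadDeriv' (281/96) (-55/8) (121/24) (15/22) (0) (by norm_num))
          · norm_num [Gsaw]
          · norm_num [Gsaw]
          · intro t h1 h2; simp only [Gsaw]; split_ifs <;> first | ring1 | (exfalso; linarith)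
          · intro t h1 h2; simp only [Gsaw]; split_ifs <;> first | ring1 | (exfalso; linarith)
        · rcases lt_trichotomy y (19/22) with h | h | h
          · have hf : fSaw y = (-55/8) + 2 * (121/24) * y := by
              simp only [fSaw]; split_ifs <;> first | ring1 | (exfalso; linarith)
            rw [hf]
            refine glue (a := 15/22) (b := 19/22) (by linarith) (by linarith) ?_ ?_ ?_ ?_
                (quadDeriv (281/96) (-55/8) (121/24) y) (quadDeriv (281/96) (-55/8) (121/24) y)
            · simp only [Gsaw]; split_ifs <;> first | ring1 | (exfalso; linarith)
            · simp only [Gsaw]; split_ifs <;> first | ring1 | (exfalso; linarith)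
            · intro t h1 h2; simp only [Gsaw]; split_ifs <;> first | ring1 | (exfalso; linarith)
            · intro t h1 h2; simp only [Gsaw]; split_ifs <;> first | ring1 | (exfalso; linarith)
          · subst h
            rw [show fSaw (19/22) = 11/6 from by norm_num [fSaw]]
            refine glue (a := 15/22) (b := 1) (by norm_num) (by norm_num) ?_ ?_ ?_ ?_
                (quadDeriv' (281/96) (-55/8) (121/24) (19/22) (11/6) (by norm_num)) (quadDeriv' (-5/6) (11/6) (0) (19/22) (11/6) (by norm_num))
            · norm_num [Gsaw]
            · norm_num [Gsaw]
            · intro t h1 h2; simp only [Gsaw]; split_ifs <;> first | ring1 | (exfalso; linarith)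
            · intro t h1 h2; simp only [Gsaw]; split_ifs <;> first | ring1 | (exfalso; linarith)
          · have hf : fSaw y = (11/6) + 2 * (0) * y := by
              simp only [fSaw]; split_ifs <;> first | ring1 | (exfalso; linarith)
            rw [hf]
            refine glue (a := 19/22) (b := (y+1)) (by linarith) (by linarith) ?_ ?_ ?_ ?_
                (quadDeriv (-5/6) (11/6) (0) y) (quadDeriv (-5/6) (11/6) (0) y)
            · simp only [Gsaw]; split_ifs <;> first | ring1 | (exfalso; linarith)
            · simp only [Gsaw]; split_ifs <;> first | ring1 | (exfalso; linarith)
            · intro t h1 h2; simp only [Gsaw]; split_ifs <;> first | ring1 | (exfalso; linarith)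
            · intro t h1 h2; simp only [Gsaw]; split_ifs <;> first | ring1 | (exfalso; linarith)

lemma Fcdf_eq (y : ℝ) : Fcdf fSaw y = Gsaw y := by
  have h := intervalIntegral.integral_eq_sub_of_hasDerivAt (f := Gsaw) (f' := fSaw)
    (fun t _ => hG t) (fSaw_ii 0 y)
  rw [Fcdf, h, show Gsaw 0 = 0 from by norm_num [Gsaw]]
  ring

lemma Gsaw_mono : Monotone Gsaw := by
  apply monotone_of_deriv_nonneg
  · exact fun y => (hG y).differentiableAt
  · intro y
    rw [(hG y).deriv]
    exact (fSaw_bounds y).1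

lemma Gsaw_lip {a b : ℝ} (h : a ≤ b) : Gsaw b - Gsaw a ≤ 11/6 * (b - a) := by
  have hm : Monotone (fun y => 11/6 * y - Gsaw y) := by
    apply monotone_of_deriv_nonneg
    · exact Differentiable.sub (by fun_prop) (fun y => (hG y).differentiableAt)
    · intro y
      have hd : HasDerivAt (fun y : ℝ => 11/6 * y - Gsaw y) (11/6 - fSaw y) y := by
        have h1 : HasDerivAt (fun y : ℝ => 11/6 * y) (11/6) y := by
          simpa using (hasDerivAt_id y).const_mul (11/6 : ℝ)
        exact h1.sub (hG y)
      rw [hd.deriv]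
      linarith [(fSaw_bounds y).2]
  have := hm h
  simp only at this
  linarith

lemma Gsaw_key {a : ℝ} (h1 : 3/22 ≤ a) (h2 : a < 1/2) :
    Gsaw (a + 4/11) - Gsaw a ≤ 1/4 := by
  have hint := mul_nonneg (by linarith : (0:ℝ) ≤ 11/22 - a) (by linarith : (0:ℝ) ≤ a - 3/22)
  rcases lt_or_ge a (7/22) with hc | hc
  · have e1 : Gsaw a = 5/12 - 121/24 * (7/22 - a)^2 := by
      simp only [Gsaw]; rw [if_neg (by linarith), if_pos hc]
    have e2 : Gsaw (a + 4/11) = 7/12 - 121/48 * (15/22 - (a + 4/11))^2 := by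
      simp only [Gsaw]
      rw [if_neg (by linarith), if_neg (by linarith), if_neg (by linarith), if_pos (by linarith)]
    rw [e1, e2]
    nlinarith
  · have e1 : Gsaw a = 5/12 + 121/48 * (a - 7/22)^2 := by
      simp only [Gsaw]
      rw [if_neg (by linarith), if_neg (by linarith), if_pos (by linarith)]
    have e2 : Gsaw (a + 4/11) = 7/12 + 121/24 * ((a + 4/11) - 15/22)^2 := by
      simp only [Gsaw]
      rw [if_neg (by linarith), if_neg (by linarith), if_neg (by linarith), if_neg (by linarith),
        if_pos (by linarith)]
    rw [e1, e2]
    nlinarith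

lemma util_left_s4 {f : ℝ → ℝ} {a b x : ℝ} (hab : a < b) (hx : x < a) :
    util f x {a, b} = Fcdf f ((x + a) / 2) := by
  have h1 : {s ∈ ({a, b} : Set ℝ) | x < s} = {a, b} := by
    ext s
    simp only [Set.mem_setOf_eq, Set.mem_insert_iff, Set.mem_singleton_iff]
    constructor
    · exact fun hs => hs.1
    · rintro (rfl | rfl)
      · exact ⟨Or.inl rfl, hx⟩
      · exact ⟨Or.inr rfl, hx.trans hab⟩
  have h2 : {s ∈ ({a, b} : Set ℝ) | s < x} = (∅ : Set ℝ) := by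
    ext s
    simp only [Set.mem_setOf_eq, Set.mem_insert_iff, Set.mem_singleton_iff,
      Set.mem_empty_iff_false, iff_false, not_and]
    rintro (rfl | rfl) <;> intro hc <;> linarith
  rw [util, h1, h2, if_pos ⟨a, by simp⟩, if_neg (by simp [Set.not_nonempty_empty]),
    csInf_pair, inf_eq_left.mpr hab.le]
  simp [Fcdf, intervalIntegral.integral_same]

lemma util_mid_s4 {f : ℝ → ℝ} {a b x : ℝ} (hax : a < x) (hxb : x < b) :
    util f x {a, b} = Fcdf f ((x + b) / 2) - Fcdf f ((x + a) / 2) := by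
  have h1 : {s ∈ ({a, b} : Set ℝ) | x < s} = {b} := by
    ext s
    simp only [Set.mem_setOf_eq, Set.mem_insert_iff, Set.mem_singleton_iff]
    constructor
    · rintro ⟨rfl | rfl, hs⟩
      · exfalso; linarith
      · rfl
    · rintro rfl; exact ⟨Or.inr rfl, hxb⟩
  have h2 : {s ∈ ({a, b} : Set ℝ) | s < x} = {a} := by
    ext s
    simp only [Set.mem_setOf_eq, Set.mem_insert_iff, Set.mem_singleton_iff]
    constructor
    · rintro ⟨rfl | rfl, hs⟩
      · rfl
      · exfalso; linarith
    · rintro rfl; exact ⟨Or.inl rfl, hax⟩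
  rw [util, h1, h2, if_pos ⟨b, rfl⟩, if_pos ⟨a, rfl⟩, csInf_singleton, csSup_singleton]

lemma util_right_s4 {f : ℝ → ℝ} {a b x : ℝ} (hab : a < b) (hx : b < x) :
    util f x {a, b} = Fcdf f 1 - Fcdf f ((x + b) / 2) := by
  have h1 : {s ∈ ({a, b} : Set ℝ) | x < s} = (∅ : Set ℝ) := by
    ext s
    simp only [Set.mem_setOf_eq, Set.mem_insert_iff, Set.mem_singleton_iff,
      Set.mem_empty_iff_false, iff_false, not_and]
    rintro (rfl | rfl) <;> intro hc <;> linarith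
  have h2 : {s ∈ ({a, b} : Set ℝ) | s < x} = {a, b} := by
    ext s
    simp only [Set.mem_setOf_eq, Set.mem_insert_iff, Set.mem_singleton_iff]
    constructor
    · exact fun hs => hs.1
    · rintro (rfl | rfl)
      · exact ⟨Or.inl rfl, hab.trans hx⟩
      · exact ⟨Or.inr rfl, hx⟩
  rw [util, h1, h2, if_neg (by simp [Set.not_nonempty_empty]), if_pos ⟨a, by simp⟩,
    csSup_pair, sup_eq_right.mpr hab.le]


/-- The density `fSaw` is nonnegative, bounded by `M = 22·(1/12) = 11/6`,
integrates to 1 on [0,1], and for every separation `0 < δ ≤ 10⁻⁴` the profile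
`X = (3/22, 1/2, 19/22)` is a `1/12`-equilibrium at separation `δ`. -/
theorem stmt4 :
    (∀ z ∈ Set.Icc (0:ℝ) 1, 0 ≤ fSaw z) ∧
    (∀ z ∈ Set.Icc (0:ℝ) 1, fSaw z ≤ 11/6) ∧
    ((∫ z in (0:ℝ)..1, fSaw z) = 1) ∧
    (∀ δ : ℝ, 0 < δ → δ ≤ 1/10000 →
      IsEquilibrium3 fSaw (3/22) (1/2) (19/22) δ (1/12)) := by

  have hG1 : Gsaw 1 = 1 := by norm_num [Gsaw]
  have hG322 : Gsaw (3/22) = 1/4 := by norm_num [Gsaw]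
  have hG12 : Gsaw (1/2) = 1/2 := by norm_num [Gsaw]
  have hG1922 : Gsaw (19/22) = 3/4 := by norm_num [Gsaw]
  refine ⟨fun z _ => (fSaw_bounds z).1, fun z _ => (fSaw_bounds z).2,
    (Fcdf_eq 1).trans hG1, ?_⟩
  intro δ hδ hδ'
  refine ⟨?_, ?_, ?_⟩
  · -- candidate 1 at 3/22, others {1/2, 19/22}
    intro x' hx' hd2 hd3
    have hu : util fSaw (3/22) {(1/2 : ℝ), 19/22} = 5/12 := by
      rw [util_left_s4 (by norm_num) (by norm_num), Fcdf_eq]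
      norm_num [Gsaw]
    rw [hu]
    rcases lt_trichotomy x' (1/2) with hc | hc | hc
    · rw [util_left_s4 (by norm_num) hc, Fcdf_eq]
      have := Gsaw_mono (show (x' + 1/2)/2 ≤ 1/2 by linarith)
      linarith
    · exfalso; rw [hc] at hd2; simp at hd2; linarith
    · rcases lt_trichotomy x' (19/22) with hc2 | hc2 | hc2
      · rw [util_mid_s4 hc hc2, Fcdf_eq, Fcdf_eq]
        have := Gsaw_lip (show (x' + 1/2)/2 ≤ (x' + 19/22)/2 by linarith)
        linarith
      · exfalso; rw [hc2] at hd3; simp at hd3; linarith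
      · rw [util_right_s4 (by norm_num) hc2, Fcdf_eq, Fcdf_eq, hG1]
        have := Gsaw_mono (show (19/22 : ℝ) ≤ (x' + 19/22)/2 by linarith)
        linarith
  · -- candidate 2 at 1/2, others {3/22, 19/22}
    intro x' hx' hd1 hd3
    have hu : util fSaw (1/2) {(3/22 : ℝ), 19/22} = 1/6 := by
      rw [util_mid_s4 (by norm_num) (by norm_num), Fcdf_eq, Fcdf_eq]
      norm_num [Gsaw]
    rw [hu]
    rcases lt_trichotomy x' (3/22) with hc | hc | hc
    · rw [util_left_s4 (by norm_num) hc, Fcdf_eq]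
      have := Gsaw_mono (show (x' + 3/22)/2 ≤ 3/22 by linarith)
      linarith
    · exfalso; rw [hc] at hd1; simp at hd1; linarith
    · rcases lt_trichotomy x' (19/22) with hc2 | hc2 | hc2
      · rw [util_mid_s4 hc hc2, Fcdf_eq, Fcdf_eq]
        have hrw : (x' + 19/22)/2 = (x' + 3/22)/2 + 4/11 := by ring
        rw [hrw]
        have := Gsaw_key (a := (x' + 3/22)/2) (by linarith) (by linarith)
        linarith
      · exfalso; rw [hc2] at hd3; simp at hd3; linarith
      · rw [util_right_s4 (by norm_num) hc2, Fcdf_eq, Fcdf_eq, hG1]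
        have := Gsaw_mono (show (19/22 : ℝ) ≤ (x' + 19/22)/2 by linarith)
        linarith
  · -- candidate 3 at 19/22, others {3/22, 1/2}
    intro x' hx' hd1 hd2
    have hu : util fSaw (19/22) {(3/22 : ℝ), 1/2} = 5/12 := by
      rw [util_right_s4 (by norm_num) (by norm_num), Fcdf_eq, Fcdf_eq]
      norm_num [Gsaw]
    rw [hu]
    rcases lt_trichotomy x' (3/22) with hc | hc | hc
    · rw [util_left_s4 (by norm_num) hc, Fcdf_eq]
      have := Gsaw_mono (show (x' + 3/22)/2 ≤ 3/22 by linarith)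
      linarith
    · exfalso; rw [hc] at hd1; simp at hd1; linarith
    · rcases lt_trichotomy x' (1/2) with hc2 | hc2 | hc2
      · rw [util_mid_s4 hc hc2, Fcdf_eq, Fcdf_eq]
        have := Gsaw_lip (show (x' + 3/22)/2 ≤ (x' + 1/2)/2 by linarith)
        linarith
      · exfalso; rw [hc2] at hd2; simp at hd2; linarith
      · rw [util_right_s4 (by norm_num) hc2, Fcdf_eq, Fcdf_eq, hG1]
        have := Gsaw_mono (show (1/2 : ℝ) ≤ (x' + 1/2)/2 by linarith)
        linarith
end

section
/- Suppose 0 ≤ x₁ ≤ x₂' ≤ x₂ ≤ x₃ ≤ 1 with F(x₂') ≥ 3/7, F(x₃) = 5/7, and F((x₂' + x₃)/2) − F(x₂') = 1/7. Then [F((x₂ + x₃)/2) − F((x₁ + x₂)/2)] − [F((x₂' + x₃)/2) − F((x₁ + x₂')/2)] ≤ 1/7. (That is, the middle candidate's utility at x₂ exceeds his utility at x₂' by at most 1/7.) -/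
open MeasureTheory

lemma Fcdf_mono (f : ℝ → ℝ)
    (hfi : IntervalIntegrable f volume 0 1)
    (hf0 : ∀ z ∈ Set.Icc (0:ℝ) 1, 0 ≤ f z)
    {a b : ℝ} (ha : 0 ≤ a) (hab : a ≤ b) (hb : b ≤ 1) :
    Fcdf f a ≤ Fcdf f b := by
  have hia : IntervalIntegrable f volume 0 a := by
    apply hfi.mono_set
    rw [Set.uIcc_of_le ha, Set.uIcc_of_le (show (0:ℝ) ≤ 1 by norm_num)]
    exact Set.Icc_subset_Icc le_rfl (hab.trans hb)
  have hib : IntervalIntegrable f volume a b := by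
    apply hfi.mono_set
    rw [Set.uIcc_of_le hab, Set.uIcc_of_le (show (0:ℝ) ≤ 1 by norm_num)]
    exact Set.Icc_subset_Icc ha hb
  have h : Fcdf f b = Fcdf f a + ∫ z in a..b, f z := by
    rw [Fcdf, Fcdf, intervalIntegral.integral_add_adjacent_intervals hia hib]
  rw [h]
  have : 0 ≤ ∫ z in a..b, f z := by
    apply intervalIntegral.integral_nonneg hab
    intro u hu
    exact hf0 u ⟨ha.trans hu.1, hu.2.trans hb⟩
  linarith

/-- If `x₁ ≤ x₂' ≤ x₂ ≤ x₃`, `F(x₂') ≥ 3/7`, `F(x₃) = 5/7` and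
`F((x₂' + x₃)/2) − F(x₂') = 1/7`, then the middle candidate's utility at `x₂` exceeds
his utility at `x₂'` by at most `1/7`. -/
theorem stmt14 (f : ℝ → ℝ) (M x₁ x₂' x₂ x₃ : ℝ)
    (hM : 0 < M)
    (hfi : IntervalIntegrable f volume 0 1)
    (hf0 : ∀ z ∈ Set.Icc (0:ℝ) 1, 0 ≤ f z)
    (hfM : ∀ z ∈ Set.Icc (0:ℝ) 1, f z ≤ M)
    (hf1 : (∫ z in (0:ℝ)..1, f z) = 1)
    (h0 : 0 ≤ x₁) (h1 : x₁ ≤ x₂') (h2 : x₂' ≤ x₂) (h3 : x₂ ≤ x₃) (h4 : x₃ ≤ 1)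
    (hF2' : 3/7 ≤ Fcdf f x₂') (hF3 : Fcdf f x₃ = 5/7)
    (hmid : Fcdf f ((x₂' + x₃) / 2) - Fcdf f x₂' = 1/7) :
    (Fcdf f ((x₂ + x₃) / 2) - Fcdf f ((x₁ + x₂) / 2))
      - (Fcdf f ((x₂' + x₃) / 2) - Fcdf f ((x₁ + x₂') / 2)) ≤ 1/7 := by
  have hA : Fcdf f ((x₁ + x₂') / 2) ≤ Fcdf f ((x₁ + x₂) / 2) :=
    Fcdf_mono f hfi hf0 (by linarith) (by linarith) (by linarith)
  have hB : Fcdf f ((x₂ + x₃) / 2) ≤ Fcdf f x₃ :=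
    Fcdf_mono f hfi hf0 (by linarith) (by linarith) (by linarith)
  have hC : Fcdf f ((x₂' + x₃) / 2) ≥ 3/7 + 1/7 := by linarith
  linarith
end
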